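/- The compactification X̄₂(M) = BΔ(ε) ∪_{ι_ε} X₂(M), obtained by attaching the blow-up BΔ(ε) to the configuration space X₂(M) along the embedding ι_ε of Δ⁺(ε), is a compact topological space in which X₂(M) is a dense open subset; moreover X̄₂(M) does not depend on the choice of ε ∈ (0, 1/2). -/

import Mathlib

noncomputable section
open Set MeasureTheory

/-- The deck transformation relation defining the Möbius band: `(z,w) ↦ (z+1, -w)`. -/
def MobRel (p q : ℝ × ℝ) : Prop :=
  ∃ n : ℤ, q.1 = p.1 + n ∧ q.2 = (-1 : ℝ) ^ n * p.2

/-- The extended (open) Möbius band `ℝ²/⟨τ⟩`. -/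
def Mext : Type := Quot MobRel

instance : TopologicalSpace Mext := instTopologicalSpaceQuot

/-- Projection from the plane. -/
def piE : ℝ × ℝ → Mext := Quot.mk _

/-- The strip `ℝ × [-1/2, 1/2]`. -/
def stripS : Set (ℝ × ℝ) := {p | p.2 ∈ Icc (-(1:ℝ)/2) (1/2)}

/-- The closed Möbius band `M = (ℝ × [-1/2,1/2])/⟨τ⟩`. -/
def Mob : Type := {x : Mext // x ∈ piE '' stripS}

instance : TopologicalSpace Mob := instTopologicalSpaceSubtype

/-- The projection `π` from the strip to the Möbius band. -/
def piM (p : ℝ × ℝ) (hp : p ∈ stripS) : Mob := ⟨piE p, ⟨p, hp, rfl⟩⟩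

/-- The boundary `∂M` of the Möbius band. -/
def MobBoundary : Set Mob := {x | ∃ p ∈ stripS, piE p = x.1 ∧ |p.2| = 1/2}

/-- The interior of the Möbius band. -/
def MobInterior : Set Mob := {x | ∃ p ∈ stripS, piE p = x.1 ∧ |p.2| < 1/2}

/-- The "branch cut" `ℓ = π({1/2} × I)`. -/
def lineL : Set Mob := {x | ∃ y ∈ Icc (-(1:ℝ)/2) (1/2), piE (1/2, y) = x.1}

/-- `M̂ = M \ ℓ`, an embedded open disc chart. -/
def Mhat : Set Mob := {x | x ∉ lineL}

instance : MeasurableSpace Mext := borel _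
instance : BorelSpace Mext := ⟨rfl⟩
instance : MeasurableSpace Mob := Subtype.instMeasurableSpace

/-- A fundamental domain for the Möbius band. -/
def fundDom : Set (ℝ × ℝ) := Ico (0:ℝ) 1 ×ˢ Icc (-(1:ℝ)/2) (1/2)

/-- The measure on the Möbius band induced by the standard density form `ω`,
i.e. the push-forward of Lebesgue measure on a fundamental domain. -/
def mobMeasure : Measure Mob :=
  Measure.comap Subtype.val ((volume.restrict fundDom).map piE)


/-- The Euclidean norm on `ℝ²` (the Riemannian metric of `M` comes from the Euclidean
metric of the plane). -/
def e2 (v : ℝ × ℝ) : ℝ := Real.sqrt (v.1 ^ 2 + v.2 ^ 2)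

/-- The distance on the extended Möbius band induced by the Euclidean metric. -/
def mdist (x y : Mext) : ℝ :=
  sInf {r : ℝ | ∃ a b : ℝ × ℝ, piE a = x ∧ piE b = y ∧ e2 (a - b) = r}

/-- The deck-transformation relation on `ℝ² × ℝ²` defining the tangent bundle of the
extended Möbius band (`dτ(z,w;v₁,v₂) = (z+1,-w;v₁,-v₂)`). -/
def TanRel : ((ℝ × ℝ) × (ℝ × ℝ)) → ((ℝ × ℝ) × (ℝ × ℝ)) → Prop :=
  fun a b => ∃ n : ℤ, b.1.1 = a.1.1 + n ∧ b.1.2 = (-1:ℝ) ^ n * a.1.2 ∧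
    b.2.1 = a.2.1 ∧ b.2.2 = (-1:ℝ) ^ n * a.2.2

/-- The tangent bundle of the extended Möbius band; it contains the tangent bundle `TM`
of `M` as the part with footpoint in the strip. -/
def TMext : Type := Quot TanRel

instance : TopologicalSpace TMext := instTopologicalSpaceQuot

/-- The blow-up `BΔ(ε)` of the `ε`-neighbourhood `Δ(ε)` of the diagonal, realized as a
subspace of the tangent bundle via the embedding `(p,q,R) ↦ e^{d(p,q)} v_R`: it consists of
the classes of pairs `(p,v)` with `p` in the strip, `1 ≤ |v|`, `log |v| ≤ ε`, and such that
if `|v| > 1` then the point `q = exp_p((log|v|)·v/|v|)` lies in `M`. -/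
def BDelta (ε : ℝ) : Set TMext :=
  {w | ∃ p v : ℝ × ℝ, Quot.mk TanRel (p, v) = w ∧ p ∈ stripS ∧
    1 ≤ e2 v ∧ Real.log (e2 v) ≤ ε ∧
    (1 < e2 v → p + (Real.log (e2 v) / e2 v) • v ∈ stripS)}

/-- The configuration space `X₂(M) = (M × M) \ Δ` of two distinct points in the Möbius band. -/
def X2M : Type := {z : Mob × Mob // z.1 ≠ z.2}

instance : TopologicalSpace X2M := instTopologicalSpaceSubtype

/-- A blow-up point `w` matches a configuration `z = (z₁,z₂) ∈ Δ⁺(ε)` when `w` is the image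
of `z` under the natural embedding `(p,q) ↦ (p,q,R_{pq}) ↦ e^{d(p,q)} v_{R_{pq}}`. -/
def MatchesBD (ε : ℝ) (w : TMext) (z : X2M) : Prop :=
  ∃ p q v : ℝ × ℝ, w = Quot.mk TanRel (p, v) ∧ p ∈ stripS ∧ q ∈ stripS ∧
    piE p = z.1.1.1 ∧ piE q = z.1.2.1 ∧ 1 < e2 v ∧ Real.log (e2 v) ≤ ε ∧
    q = p + (Real.log (e2 v) / e2 v) • v

/-- The gluing relation for the adjunction space `BΔ(ε) ∪_{ι_ε} X₂(M)`. -/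
def GlueRel (ε : ℝ) : (↥(BDelta ε) ⊕ X2M) → (↥(BDelta ε) ⊕ X2M) → Prop :=
  fun a b =>
    match a, b with
    | Sum.inl x, Sum.inr z => MatchesBD ε x.1 z
    | Sum.inr z, Sum.inl x => MatchesBD ε x.1 z
    | _, _ => False

/-- The compactification `X̄₂(M) = BΔ(ε) ∪_{ι_ε} X₂(M)` of the configuration space. -/
def X2bar (ε : ℝ) : Type := Quot (GlueRel ε)

instance (ε : ℝ) : TopologicalSpace (X2bar ε) := instTopologicalSpaceQuot

/-- The canonical map `X₂(M) → X̄₂(M)`. -/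
def jX2 (ε : ℝ) : X2M → X2bar ε := fun z => Quot.mk _ (Sum.inr z)

/-- The canonical map `BΔ(ε) → X̄₂(M)`. -/
def jBD (ε : ℝ) : ↥(BDelta ε) → X2bar ε := fun x => Quot.mk _ (Sum.inl x)

section Aux
open Real Topology

/-- The deck transformation `τⁿ`. -/
def tau (n : ℤ) (a : ℝ × ℝ) : ℝ × ℝ := (a.1 + n, (-1:ℝ)^n * a.2)

lemma neg_one_zpow_sq (n : ℤ) : ((-1:ℝ)^n) * ((-1:ℝ)^n) = 1 := by
  rcases Int.even_or_odd n with h | h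
  · rw [h.neg_one_zpow]; norm_num
  · rw [h.neg_one_zpow]; norm_num

lemma abs_neg_one_zpow' (n : ℤ) : |((-1:ℝ)^n)| = 1 := by
  rcases Int.even_or_odd n with h | h
  · rw [h.neg_one_zpow]; norm_num
  · rw [h.neg_one_zpow]; norm_num

lemma tau_tau (m n : ℤ) (a : ℝ × ℝ) : tau m (tau n a) = tau (m + n) a := by
  simp only [tau, Prod.mk.injEq]
  constructor
  · push_cast; ring
  · rw [← mul_assoc, ← zpow_add₀ (by norm_num : (-1:ℝ) ≠ 0)]

lemma tau_zero (a : ℝ × ℝ) : tau 0 a = a := by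
  simp [tau]

lemma mobRel_iff (a b : ℝ × ℝ) : MobRel a b ↔ ∃ n : ℤ, b = tau n a := by
  constructor
  · rintro ⟨n, h1, h2⟩; exact ⟨n, Prod.ext h1 h2⟩
  · rintro ⟨n, rfl⟩; exact ⟨n, rfl, rfl⟩

lemma mobRel_equiv : Equivalence MobRel := by
  constructor
  · intro a; rw [mobRel_iff]; exact ⟨0, (tau_zero a).symm⟩
  · intro a b h; rw [mobRel_iff] at *
    obtain ⟨n, rfl⟩ := h; exact ⟨-n, by rw [tau_tau, neg_add_cancel, tau_zero]⟩
  · intro a b c h1 h2; rw [mobRel_iff] at *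
    obtain ⟨n, rfl⟩ := h1; obtain ⟨m, rfl⟩ := h2; exact ⟨m + n, (tau_tau m n a)⟩

lemma piE_eq {a b : ℝ × ℝ} : piE a = piE b ↔ ∃ n : ℤ, b = tau n a := by
  rw [← mobRel_iff]
  exact Quot.eq.trans (mobRel_equiv.eqvGen_iff)

/-- The derivative deck transformation `dτⁿ` on `ℝ² × ℝ²`. -/
def dtau (n : ℤ) (a : (ℝ × ℝ) × (ℝ × ℝ)) : (ℝ × ℝ) × (ℝ × ℝ) :=
  (tau n a.1, (a.2.1, (-1:ℝ)^n * a.2.2))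

lemma tanRel_iff (a b : (ℝ × ℝ) × (ℝ × ℝ)) : TanRel a b ↔ ∃ n : ℤ, b = dtau n a := by
  constructor
  · rintro ⟨n, h1, h2, h3, h4⟩
    exact ⟨n, Prod.ext (Prod.ext h1 h2) (Prod.ext h3 h4)⟩
  · rintro ⟨n, rfl⟩; exact ⟨n, rfl, rfl, rfl, rfl⟩

lemma dtau_dtau (m n : ℤ) (a : (ℝ × ℝ) × (ℝ × ℝ)) : dtau m (dtau n a) = dtau (m + n) a := by
  simp only [dtau, tau_tau, Prod.mk.injEq, true_and]
  rw [← mul_assoc, ← zpow_add₀ (by norm_num : (-1:ℝ) ≠ 0)]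

lemma dtau_zero (a : (ℝ × ℝ) × (ℝ × ℝ)) : dtau 0 a = a := by
  simp [dtau, tau_zero]

lemma tanRel_equiv : Equivalence TanRel := by
  constructor
  · intro a; rw [tanRel_iff]; exact ⟨0, (dtau_zero a).symm⟩
  · intro a b h; rw [tanRel_iff] at *
    obtain ⟨n, rfl⟩ := h; exact ⟨-n, by rw [dtau_dtau, neg_add_cancel, dtau_zero]⟩
  · intro a b c h1 h2; rw [tanRel_iff] at *
    obtain ⟨n, rfl⟩ := h1; obtain ⟨m, rfl⟩ := h2; exact ⟨m + n, (dtau_dtau m n a)⟩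

lemma tmk_eq {a b : (ℝ × ℝ) × (ℝ × ℝ)} :
    Quot.mk TanRel a = Quot.mk TanRel b ↔ ∃ n : ℤ, b = dtau n a := by
  rw [← tanRel_iff]
  exact Quot.eq.trans (tanRel_equiv.eqvGen_iff)

end Aux
section Aux2
open Real Topology

lemma e2_nonneg (v : ℝ × ℝ) : 0 ≤ e2 v := Real.sqrt_nonneg _

lemma e2_zero : e2 (0 : ℝ × ℝ) = 0 := by simp [e2]

lemma e2_eq_zero {v : ℝ × ℝ} : e2 v = 0 ↔ v = 0 := by
  rw [e2, Real.sqrt_eq_zero (by positivity)]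
  constructor
  · intro h
    have h1 : v.1 = 0 := by nlinarith [sq_nonneg v.1, sq_nonneg v.2]
    have h2 : v.2 = 0 := by nlinarith [sq_nonneg v.1, sq_nonneg v.2]
    exact Prod.ext h1 h2
  · rintro rfl; simp

lemma e2_pos {v : ℝ × ℝ} (h : v ≠ 0) : 0 < e2 v :=
  lt_of_le_of_ne (e2_nonneg v) (fun h' => h (e2_eq_zero.mp h'.symm))

lemma e2_smul (c : ℝ) (v : ℝ × ℝ) : e2 (c • v) = |c| * e2 v := by
  have h1 : (c • v).1 = c * v.1 := rfl
  have h2 : (c • v).2 = c * v.2 := rfl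
  rw [e2, e2, h1, h2]
  have : (c * v.1) ^ 2 + (c * v.2) ^ 2 = c ^ 2 * (v.1 ^ 2 + v.2 ^ 2) := by ring
  rw [this, Real.sqrt_mul (sq_nonneg c), Real.sqrt_sq_eq_abs]

lemma e2_flip (n : ℤ) (v : ℝ × ℝ) : e2 (v.1, (-1:ℝ)^n * v.2) = e2 v := by
  rw [e2, e2]
  congr 1
  have h : ((-1:ℝ)^n * v.2) ^ 2 = (((-1:ℝ)^n) * ((-1:ℝ)^n)) * v.2 ^ 2 := by ring
  rw [h, neg_one_zpow_sq, one_mul]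

lemma tau_sub (n : ℤ) (a b : ℝ × ℝ) :
    tau n a - tau n b = ((a - b).1, (-1:ℝ)^n * (a - b).2) := by
  simp only [tau, Prod.mk_sub_mk, Prod.fst_sub, Prod.snd_sub, Prod.mk.injEq]
  constructor <;> ring

lemma e2_sub_tau (n : ℤ) (a b : ℝ × ℝ) : e2 (tau n a - tau n b) = e2 (a - b) := by
  rw [tau_sub, e2_flip]

lemma e2_fst_le (v : ℝ × ℝ) : |v.1| ≤ e2 v := by
  rw [← Real.sqrt_sq_eq_abs]
  exact Real.sqrt_le_sqrt (by nlinarith [sq_nonneg v.2])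

lemma e2_snd_le (v : ℝ × ℝ) : |v.2| ≤ e2 v := by
  rw [← Real.sqrt_sq_eq_abs]
  exact Real.sqrt_le_sqrt (by nlinarith [sq_nonneg v.1])

lemma e2_eq_abs (v : ℝ × ℝ) : e2 v = ‖(⟨v.1, v.2⟩ : ℂ)‖ := by
  rw [Complex.norm_def, Complex.normSq_apply, e2]
  congr 1
  ring

lemma e2_triangle (a b : ℝ × ℝ) : e2 (a + b) ≤ e2 a + e2 b := by
  have ha : e2 (a + b) = ‖((⟨a.1, a.2⟩ : ℂ) + ⟨b.1, b.2⟩)‖ := by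
    rw [e2_eq_abs]
    congr 1 <;> simp [Complex.add_def]
  rw [ha, e2_eq_abs, e2_eq_abs]
  exact norm_add_le _ _

lemma e2_sub_triangle (a b c : ℝ × ℝ) : e2 (a - c) ≤ e2 (a - b) + e2 (b - c) := by
  have : a - c = (a - b) + (b - c) := by abel
  rw [this]
  exact e2_triangle _ _

lemma e2_sub_comm (a b : ℝ × ℝ) : e2 (a - b) = e2 (b - a) := by
  have : a - b = (-1 : ℝ) • (b - a) := by simp
  rw [this, e2_smul]
  norm_num

lemma continuous_e2 : Continuous e2 := by
  apply Real.continuous_sqrt.comp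
  fun_prop

lemma mem_strip_iff {a : ℝ × ℝ} : a ∈ stripS ↔ |a.2| ≤ 1/2 := by
  rw [stripS, Set.mem_setOf_eq, Set.mem_Icc, abs_le]
  constructor <;> intro h <;> constructor <;> linarith [h.1, h.2]

lemma tau_mem_strip {n : ℤ} {a : ℝ × ℝ} (h : a ∈ stripS) : tau n a ∈ stripS := by
  rw [mem_strip_iff] at h ⊢
  show |(-1:ℝ)^n * a.2| ≤ 1/2
  rw [abs_mul, abs_neg_one_zpow, one_mul]
  exact h

lemma isClosed_strip : IsClosed stripS :=
  IsClosed.preimage continuous_snd isClosed_Icc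

lemma mob_rep_strip (x : Mob) {a : ℝ × ℝ} (ha : piE a = x.1) : a ∈ stripS := by
  obtain ⟨a₀, h₀, hmk⟩ := x.2
  have : piE a₀ = piE a := by rw [hmk, ha]
  obtain ⟨n, rfl⟩ := piE_eq.mp this
  exact tau_mem_strip h₀

lemma continuous_tau (n : ℤ) : Continuous (tau n) := by
  unfold tau; fun_prop

lemma isOpenMap_piE : IsOpenMap piE := by
  intro O hO
  apply (isOpen_coinduced (f := Quot.mk MobRel)).mpr
  have : Quot.mk MobRel ⁻¹' (piE '' O) = ⋃ n : ℤ, (tau n) ⁻¹' O := by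
    ext a
    simp only [Set.mem_preimage, Set.mem_image, Set.mem_iUnion]
    constructor
    · rintro ⟨b, hb, hba⟩
      obtain ⟨n, rfl⟩ := piE_eq.mp hba.symm
      exact ⟨n, hb⟩
    · rintro ⟨n, hn⟩
      exact ⟨tau n a, hn, (piE_eq.mpr ⟨n, rfl⟩).symm⟩
  show IsOpen (Quot.mk MobRel ⁻¹' (piE '' O))
  rw [this]
  exact isOpen_iUnion fun n => (continuous_tau n).isOpen_preimage O hO

lemma continuous_piE : Continuous piE := continuous_quot_mk

end Aux2
section Aux3
open Real Topology

/-- scaling factor for the endpoint map -/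
def mfac (v : ℝ × ℝ) : ℝ := Real.log (max 1 (e2 v)) / max 1 (e2 v)

/-- endpoint of the (clipped) geodesic determined by `(p, v)` -/
def qpt (a : (ℝ × ℝ) × (ℝ × ℝ)) : ℝ × ℝ := a.1 + mfac a.2 • a.2

lemma e2_flip' (n : ℤ) (x y : ℝ) : e2 (x, (-1:ℝ)^n * y) = e2 (x, y) := by
  have := e2_flip n (x, y)
  simpa using this

lemma mfac_flip (n : ℤ) (v : ℝ × ℝ) : mfac (v.1, (-1:ℝ)^n * v.2) = mfac v := by
  unfold mfac
  rw [e2_flip' n v.1 v.2]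

lemma max1e2_pos (v : ℝ × ℝ) : 0 < max 1 (e2 v) := lt_of_lt_of_le one_pos (le_max_left _ _)

lemma continuous_mfac : Continuous mfac := by
  have hc : Continuous (fun v : ℝ × ℝ => max 1 (e2 v)) := continuous_const.max continuous_e2
  exact (hc.log (fun v => (max1e2_pos v).ne')).div hc (fun v => (max1e2_pos v).ne')

lemma continuous_qpt : Continuous qpt :=
  Continuous.add continuous_fst ((continuous_mfac.comp continuous_snd).smul continuous_snd)

lemma mfac_of_ge {v : ℝ × ℝ} (h : 1 ≤ e2 v) : mfac v = Real.log (e2 v) / e2 v := by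
  rw [mfac, max_eq_right h]

lemma qpt_of_ge {p v : ℝ × ℝ} (h : 1 ≤ e2 v) :
    qpt (p, v) = p + (Real.log (e2 v) / e2 v) • v := by
  rw [qpt, mfac_of_ge h]

lemma qpt_dtau (n : ℤ) (a : (ℝ × ℝ) × (ℝ × ℝ)) : qpt (dtau n a) = tau n (qpt a) := by
  have hm : mfac ((dtau n a).2) = mfac a.2 := by
    have : (dtau n a).2 = (a.2.1, (-1:ℝ)^n * a.2.2) := rfl
    rw [this, mfac_flip]
  unfold qpt
  rw [hm]
  apply Prod.ext
  · show (tau n a.1).1 + mfac a.2 * a.2.1 = (a.1 + mfac a.2 • a.2).1 + (n : ℝ)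
    simp only [tau, Prod.fst_add, Prod.smul_fst, smul_eq_mul]
    ring
  · show (tau n a.1).2 + mfac a.2 * ((-1:ℝ)^n * a.2.2) = (-1:ℝ)^n * (a.1 + mfac a.2 • a.2).2
    simp only [tau, Prod.snd_add, Prod.smul_snd, smul_eq_mul]
    ring

/-- the norm function on `TMext`. -/
def En : TMext → ℝ := Quot.lift (fun a => e2 a.2) (by
  intro a b h
  obtain ⟨n, rfl⟩ := (tanRel_iff a b).mp h
  show e2 a.2 = e2 (a.2.1, (-1:ℝ)^n * a.2.2)
  rw [e2_flip])

@[simp] lemma En_mk (a : (ℝ × ℝ) × (ℝ × ℝ)) : En (Quot.mk TanRel a) = e2 a.2 := rfl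

lemma continuous_En : Continuous En := continuous_quot_lift _ (continuous_e2.comp continuous_snd)

/-- the endpoint map on `TMext`. -/
def psi : TMext → Mext × Mext := Quot.lift (fun a => (piE a.1, piE (qpt a))) (by
  intro a b h
  obtain ⟨n, rfl⟩ := (tanRel_iff a b).mp h
  show (piE a.1, piE (qpt a)) = (piE (tau n a.1), piE (qpt (dtau n a)))
  rw [qpt_dtau]
  have h1 : piE a.1 = piE (tau n a.1) := piE_eq.mpr ⟨n, rfl⟩
  have h2 : piE (qpt a) = piE (tau n (qpt a)) := piE_eq.mpr ⟨n, rfl⟩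
  rw [h1, h2])

@[simp] lemma psi_mk (a : (ℝ × ℝ) × (ℝ × ℝ)) :
    psi (Quot.mk TanRel a) = (piE a.1, piE (qpt a)) := rfl

lemma continuous_psi : Continuous psi :=
  continuous_quot_lift _ ((continuous_piE.comp continuous_fst).prodMk
    (continuous_piE.comp continuous_qpt))

lemma bdelta_mk_mem {ε : ℝ} {p v : ℝ × ℝ} (hp : p ∈ stripS) (h1 : 1 ≤ e2 v)
    (h2 : Real.log (e2 v) ≤ ε) (h3 : 1 < e2 v → qpt (p, v) ∈ stripS) :
    Quot.mk TanRel (p, v) ∈ BDelta ε := by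
  refine ⟨p, v, rfl, hp, h1, h2, fun hlt => ?_⟩
  rw [← qpt_of_ge h1]
  exact h3 hlt

lemma bdelta_elim {ε : ℝ} {w : TMext} (hw : w ∈ BDelta ε) :
    ∃ p v : ℝ × ℝ, Quot.mk TanRel (p, v) = w ∧ p ∈ stripS ∧ 1 ≤ e2 v ∧
      Real.log (e2 v) ≤ ε ∧ (1 < e2 v → qpt (p, v) ∈ stripS) := by
  obtain ⟨p, v, hmk, hp, h1, h2, h3⟩ := hw
  exact ⟨p, v, hmk, hp, h1, h2, fun hlt => by rw [qpt_of_ge h1]; exact h3 hlt⟩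

lemma en_bdelta {ε : ℝ} {w : TMext} (hw : w ∈ BDelta ε) :
    1 ≤ En w ∧ En w ≤ Real.exp ε := by
  obtain ⟨p, v, hmk, hp, h1, h2, _⟩ := bdelta_elim hw
  rw [← hmk, En_mk]
  exact ⟨h1, (Real.log_le_iff_le_exp (lt_of_lt_of_le one_pos h1)).mp h2⟩

lemma bdelta_rep_fund {ε : ℝ} {w : TMext} (hw : w ∈ BDelta ε) :
    ∃ p v : ℝ × ℝ, Quot.mk TanRel (p, v) = w ∧ p.1 ∈ Icc (0:ℝ) 1 ∧ p ∈ stripS ∧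
      1 ≤ e2 v ∧ Real.log (e2 v) ≤ ε ∧ (1 < e2 v → qpt (p, v) ∈ stripS) := by
  obtain ⟨p, v, hmk, hp, h1, h2, h3⟩ := bdelta_elim hw
  set n : ℤ := -⌊p.1⌋ with hn
  refine ⟨tau n p, (v.1, (-1:ℝ)^n * v.2), ?_, ?_, tau_mem_strip hp, ?_, ?_, ?_⟩
  · rw [← hmk]
    have hd : ((tau n p, (v.1, (-1:ℝ)^n * v.2)) : (ℝ×ℝ)×(ℝ×ℝ)) = dtau n (p, v) := rfl
    rw [hd]
    exact (tmk_eq.mpr ⟨n, rfl⟩).symm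
  · show p.1 + (n : ℝ) ∈ Icc (0:ℝ) 1
    have h4 : p.1 + (n : ℝ) = Int.fract p.1 := by
      rw [hn, Int.fract]; push_cast; ring
    rw [h4]
    exact ⟨Int.fract_nonneg _, le_of_lt (Int.fract_lt_one _)⟩
  · rw [e2_flip' n v.1 v.2]; simpa using h1
  · rw [e2_flip' n v.1 v.2]; simpa using h2
  · intro hlt
    rw [e2_flip' n v.1 v.2] at hlt
    have : qpt (tau n p, (v.1, (-1:ℝ)^n * v.2)) = qpt (dtau n (p, v)) := rfl
    rw [this, qpt_dtau]
    exact tau_mem_strip (h3 (by simpa using hlt))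

/-- compact model set for the blow-up -/
def Kset (ε : ℝ) : Set ((ℝ × ℝ) × (ℝ × ℝ)) :=
  {a | a.1.1 ∈ Icc (0:ℝ) 1 ∧ a.1 ∈ stripS ∧ 1 ≤ e2 a.2 ∧ e2 a.2 ≤ Real.exp ε ∧
    (e2 a.2 = 1 ∨ qpt a ∈ stripS)}

lemma isClosed_Kset (ε : ℝ) : IsClosed (Kset ε) := by
  have hc : Continuous (fun a : (ℝ × ℝ) × (ℝ × ℝ) => e2 a.2) := continuous_e2.comp continuous_snd
  refine IsClosed.inter (IsClosed.preimage (continuous_fst.fst) isClosed_Icc) ?_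
  refine IsClosed.inter (IsClosed.preimage continuous_fst isClosed_strip) ?_
  refine IsClosed.inter (IsClosed.preimage hc isClosed_Ici) ?_
  refine IsClosed.inter (IsClosed.preimage hc isClosed_Iic) ?_
  exact IsClosed.union (IsClosed.preimage hc isClosed_singleton)
    (IsClosed.preimage continuous_qpt isClosed_strip)

lemma isCompact_Kset (ε : ℝ) : IsCompact (Kset ε) := by
  refine IsCompact.of_isClosed_subset
    (((isCompact_Icc.prod isCompact_Icc).prod (isCompact_Icc.prod isCompact_Icc)) :
      IsCompact ((Icc (-1:ℝ) 2 ×ˢ Icc (-1:ℝ) 1) ×ˢ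
        (Icc (-(Real.exp ε)) (Real.exp ε) ×ˢ Icc (-(Real.exp ε)) (Real.exp ε))))
    (isClosed_Kset ε) ?_
  rintro ⟨p, v⟩ ⟨hp1, hp2, h1, h2, _⟩
  have hv1 : |v.1| ≤ Real.exp ε := le_trans (e2_fst_le v) h2
  have hv2 : |v.2| ≤ Real.exp ε := le_trans (e2_snd_le v) h2
  rw [mem_strip_iff] at hp2
  refine ⟨⟨⟨by linarith [hp1.1], by linarith [hp1.2]⟩, ?_⟩, ?_, ?_⟩
  · rw [abs_le] at hp2; exact ⟨by linarith [hp2.1], by linarith [hp2.2]⟩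
  · rw [abs_le] at hv1; exact ⟨hv1.1, hv1.2⟩
  · rw [abs_le] at hv2; exact ⟨hv2.1, hv2.2⟩

lemma bdelta_eq_image (ε : ℝ) : BDelta ε = Quot.mk TanRel '' Kset ε := by
  ext w
  constructor
  · intro hw
    obtain ⟨p, v, hmk, hfund, hp, h1, h2, h3⟩ := bdelta_rep_fund hw
    refine ⟨(p, v), ⟨hfund, hp, h1, (Real.log_le_iff_le_exp (lt_of_lt_of_le one_pos h1)).mp h2, ?_⟩, hmk⟩
    rcases lt_or_eq_of_le h1 with hlt | heq
    · exact Or.inr (h3 hlt)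
    · exact Or.inl heq.symm
  · rintro ⟨⟨p, v⟩, ⟨_, hp, h1, h2, h3⟩, rfl⟩
    refine bdelta_mk_mem hp h1 ?_ ?_
    · calc Real.log (e2 v) ≤ Real.log (Real.exp ε) :=
            Real.log_le_log (lt_of_lt_of_le one_pos h1) h2
        _ = ε := Real.log_exp ε
    · intro hlt
      rcases h3 with heq | hq
      · exact absurd heq.symm (ne_of_lt hlt)
      · exact hq

lemma isCompact_bdelta (ε : ℝ) : IsCompact (BDelta ε) := by
  rw [bdelta_eq_image]
  exact (isCompact_Kset ε).image continuous_quot_mk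

end Aux3
section Aux4
open Real Topology

lemma smul_fst' (c : ℝ) (w : ℝ × ℝ) : (c • w).1 = c * w.1 := rfl
lemma smul_snd' (c : ℝ) (w : ℝ × ℝ) : (c • w).2 = c * w.2 := rfl

lemma geo_dist {p v : ℝ × ℝ} (hv : 1 < e2 v) :
    e2 (p + (Real.log (e2 v) / e2 v) • v - p) = Real.log (e2 v) := by
  rw [add_sub_cancel_left, e2_smul, abs_div, abs_of_nonneg (Real.log_nonneg hv.le),
    abs_of_pos (lt_trans one_pos hv), div_mul_cancel₀]
  exact (lt_trans one_pos hv).ne'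

lemma piE_ne_of_close {p q : ℝ × ℝ} (hne : q ≠ p) (hd : e2 (q - p) < 1/2) :
    piE p ≠ piE q := by
  intro h
  obtain ⟨n, rfl⟩ := piE_eq.mp h
  rcases eq_or_ne n 0 with rfl | hn0
  · exact hne (tau_zero p)
  · have h1 : ((tau n p - p).1 : ℝ) = (n : ℝ) := by
      show p.1 + (n : ℝ) - p.1 = (n : ℝ); ring
    have h2 : |(n : ℝ)| ≤ e2 (tau n p - p) := by rw [← h1]; exact e2_fst_le _
    have h3 : (1 : ℝ) ≤ |(n : ℝ)| := by
      rw [← Int.cast_abs]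
      exact_mod_cast Int.one_le_abs hn0
    linarith

lemma int_eq_of_close {m n : ℤ} (h : |((m - n : ℤ) : ℝ)| < 1) : m = n := by
  have h2 : ((|m - n| : ℤ) : ℝ) < 1 := by rw [Int.cast_abs]; exact h
  have h3 : |m - n| < 1 := by exact_mod_cast h2
  have h4 := Int.abs_lt_one_iff.mp h3
  omega

lemma matches_construct {ε : ℝ} (hε : ε < 1/2) {p v : ℝ × ℝ} (hp : p ∈ stripS)
    (hv1 : 1 < e2 v) (hvε : Real.log (e2 v) ≤ ε) (hq : qpt (p, v) ∈ stripS) :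
    ∃ z : X2M, MatchesBD ε (Quot.mk TanRel (p, v)) z ∧
      z.1.1.1 = piE p ∧ z.1.2.1 = piE (qpt (p, v)) := by
  have hqeq : qpt (p, v) = p + (Real.log (e2 v) / e2 v) • v := qpt_of_ge hv1.le
  have ht : 0 < Real.log (e2 v) := Real.log_pos hv1
  have hdist : e2 (qpt (p, v) - p) = Real.log (e2 v) := by rw [hqeq]; exact geo_dist hv1
  have hne : qpt (p, v) ≠ p := by
    intro hc
    rw [hc, sub_self, e2_zero] at hdist
    linarith
  have hpiE : piE p ≠ piE (qpt (p, v)) := piE_ne_of_close hne (by rw [hdist]; linarith)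
  refine ⟨⟨(⟨piE p, ⟨p, hp, rfl⟩⟩, ⟨piE (qpt (p, v)), ⟨qpt (p, v), hq, rfl⟩⟩),
    fun hc => hpiE (congrArg Subtype.val hc)⟩, ?_, rfl, rfl⟩
  exact ⟨p, qpt (p, v), v, rfl, hp, hq, rfl, rfl, hv1, hvε, hqeq⟩

lemma matches_en {ε : ℝ} {w : TMext} {z : X2M} (h : MatchesBD ε w z) :
    1 < En w ∧ Real.log (En w) ≤ ε ∧ psi w = (z.1.1.1, z.1.2.1) := by
  obtain ⟨p, q, v, rfl, hp, hq, hz1, hz2, hv, hvε, hqeq⟩ := h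
  refine ⟨by rw [En_mk]; exact hv, by rw [En_mk]; exact hvε, ?_⟩
  show (piE p, piE (qpt (p, v))) = (z.1.1.1, z.1.2.1)
  rw [qpt_of_ge hv.le, ← hqeq, hz1, hz2]

lemma matches_uniq_z {ε : ℝ} {w : TMext} {z z' : X2M}
    (h : MatchesBD ε w z) (h' : MatchesBD ε w z') : z = z' := by
  have e1 := (matches_en h).2.2
  have e2 := (matches_en h').2.2
  rw [e1] at e2
  have h11 : z.1.1.1 = z'.1.1.1 := congrArg Prod.fst e2
  have h22 : z.1.2.1 = z'.1.2.1 := congrArg Prod.snd e2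
  exact Subtype.ext (Prod.ext (Subtype.ext h11) (Subtype.ext h22))

lemma matches_uniq_w {ε : ℝ} (hε : ε < 1/2) {w w' : TMext} {z : X2M}
    (h : MatchesBD ε w z) (h' : MatchesBD ε w' z) : w = w' := by
  obtain ⟨p, q, v, rfl, hp, hq, hz1, hz2, hv, hvε, hqeq⟩ := h
  obtain ⟨p', q', v', rfl, hp', hq', hz1', hz2', hv', hvε', hqeq'⟩ := h'
  have hvpos : (0:ℝ) < e2 v := lt_trans one_pos hv
  have hvpos' : (0:ℝ) < e2 v' := lt_trans one_pos hv'
  set t := Real.log (e2 v) with htdef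
  set t' := Real.log (e2 v') with htdef'
  have ht : 0 < t := Real.log_pos hv
  have ht' : 0 < t' := Real.log_pos hv'
  have htε : t ≤ ε := hvε
  have htε' : t' ≤ ε := hvε'
  have hd : e2 (q - p) = t := by rw [hqeq]; exact geo_dist hv
  have hd' : e2 (q' - p') = t' := by rw [hqeq']; exact geo_dist hv'
  -- p' = tau n p
  obtain ⟨n, hpn⟩ := piE_eq.mp (hz1.trans hz1'.symm)
  -- q' = tau m q
  obtain ⟨m, hqm⟩ := piE_eq.mp (hz2.trans hz2'.symm)
  have hdn : e2 (tau n q - p') = t := by rw [hpn, e2_sub_tau]; exact hd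
  have hmn : m = n := by
    apply int_eq_of_close
    have h1 : e2 (tau m q - tau n q) ≤ e2 (tau m q - p') + e2 (p' - tau n q) :=
      e2_sub_triangle _ _ _
    have h2 : e2 (tau m q - p') = t' := by rw [← hqm]; exact hd'
    have h3 : e2 (p' - tau n q) = t := by rw [e2_sub_comm]; exact hdn
    have h4 : ((m - n : ℤ) : ℝ) = (tau m q - tau n q).1 := by
      show ((m - n : ℤ) : ℝ) = q.1 + (m:ℝ) - (q.1 + (n:ℝ)); push_cast; ring
    rw [h4]
    calc |(tau m q - tau n q).1| ≤ e2 (tau m q - tau n q) := e2_fst_le _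
      _ ≤ t' + t := by rw [← h2, ← h3]; exact h1
      _ < 1 := by linarith
  subst hmn
  -- q' - p' is the flip of q - p
  have hsub : q' - p' = ((q - p).1, (-1:ℝ)^m * (q - p).2) := by
    rw [hqm, hpn]; exact tau_sub m q p
  have htt : t' = t := by
    rw [← hd', hsub, e2_flip, hd]
  -- norms agree
  have hnorm : e2 v' = e2 v := by
    rw [← Real.exp_log hvpos', ← Real.exp_log hvpos, ← htdef, ← htdef', htt]
  -- recover v and v'
  have hvrec : v = (e2 v / t) • (q - p) := by
    have hc : (t / e2 v) ≠ 0 := div_ne_zero ht.ne' hvpos.ne'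
    have : q - p = (t / e2 v) • v := by rw [hqeq]; rw [add_sub_cancel_left]
    rw [this, smul_smul, div_mul_div_comm, mul_comm (e2 v) t, div_self, one_smul]
    exact mul_ne_zero ht.ne' hvpos.ne'
  have hvrec' : v' = (e2 v' / t') • (q' - p') := by
    have : q' - p' = (t' / e2 v') • v' := by rw [hqeq']; rw [add_sub_cancel_left]
    rw [this, smul_smul, div_mul_div_comm, mul_comm (e2 v') t', div_self, one_smul]
    exact mul_ne_zero ht'.ne' hvpos'.ne'
  have h1 : v.1 = (e2 v / t) * (q - p).1 := by
    conv_lhs => rw [hvrec]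
    rfl
  have h2 : v.2 = (e2 v / t) * (q - p).2 := by
    conv_lhs => rw [hvrec]
    rfl
  have hv'flip : v' = (v.1, (-1:ℝ)^m * v.2) := by
    rw [hvrec', hsub, hnorm, htt]
    apply Prod.ext
    · show (e2 v / t) * (q - p).1 = v.1
      exact h1.symm
    · show (e2 v / t) * ((-1:ℝ)^m * (q - p).2) = (-1:ℝ)^m * v.2
      rw [h2]; ring
  -- conclude
  apply tmk_eq.mpr
  refine ⟨m, ?_⟩
  apply Prod.ext
  · exact hpn
  · exact hv'flip

end Aux4
section Aux5
open Real Topology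

lemma glueRel_symm {ε : ℝ} {a b : ↥(BDelta ε) ⊕ X2M} (h : GlueRel ε a b) : GlueRel ε b a := by
  cases a with
  | inl x => cases b with
    | inl x' => exact h.elim
    | inr z => exact h
  | inr z => cases b with
    | inl x' => exact h
    | inr z' => exact h.elim

/-- the gluing relation together with equality. -/
def grel (ε : ℝ) : (↥(BDelta ε) ⊕ X2M) → (↥(BDelta ε) ⊕ X2M) → Prop :=
  fun a b => a = b ∨ GlueRel ε a b

lemma grel_equiv {ε : ℝ} (hε : ε < 1/2) : Equivalence (grel ε) := by
  constructor
  · intro a; exact Or.inl rfl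
  · intro a b h
    rcases h with rfl | hg
    · exact Or.inl rfl
    · exact Or.inr (glueRel_symm hg)
  · intro a b c hab hbc
    rcases hab with rfl | hab
    · exact hbc
    rcases hbc with rfl | hbc
    · exact Or.inr hab
    cases a with
    | inl x =>
      cases b with
      | inl x' => exact hab.elim
      | inr z =>
        cases c with
        | inl x' =>
          left
          have : x.1 = x'.1 := matches_uniq_w hε hab hbc
          exact congrArg Sum.inl (Subtype.ext this)
        | inr z' => exact hbc.elim
    | inr z =>
      cases b with
      | inr z' => exact hab.elim
      | inl x =>
        cases c with
        | inr z' =>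
          left
          exact congrArg Sum.inr (matches_uniq_z hab hbc)
        | inl x' => exact hbc.elim

lemma x2bar_eq {ε : ℝ} (hε : ε < 1/2) {a b : ↥(BDelta ε) ⊕ X2M} :
    Quot.mk (GlueRel ε) a = Quot.mk (GlueRel ε) b ↔ grel ε a b := by
  rw [Quot.eq]
  constructor
  · intro h
    exact (grel_equiv hε).eqvGen_iff.mp (Relation.EqvGen.mono (fun a b hg => Or.inr hg) a b h)
  · intro h
    rcases h with rfl | hg
    · exact Relation.EqvGen.refl _
    · exact Relation.EqvGen.rel _ _ hg

lemma jBD_eq_jX2 {ε : ℝ} {x : ↥(BDelta ε)} {z : X2M} (h : MatchesBD ε x.1 z) :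
    jBD ε x = jX2 ε z :=
  Quot.sound (show GlueRel ε (Sum.inl x) (Sum.inr z) from h)

lemma jX2_eq_jX2_iff {ε : ℝ} (hε : ε < 1/2) {z z' : X2M} :
    jX2 ε z = jX2 ε z' ↔ z = z' := by
  refine (x2bar_eq (a := Sum.inr z) (b := Sum.inr z') hε).trans ?_
  constructor
  · intro h
    rcases h with h | h
    · exact Sum.inr.inj h
    · exact h.elim
  · rintro rfl; exact Or.inl rfl

lemma jBD_eq_jBD_iff {ε : ℝ} (hε : ε < 1/2) {x x' : ↥(BDelta ε)} :
    jBD ε x = jBD ε x' ↔ x = x' := by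
  refine (x2bar_eq (a := Sum.inl x) (b := Sum.inl x') hε).trans ?_
  constructor
  · intro h
    rcases h with h | h
    · exact Sum.inl.inj h
    · exact h.elim
  · rintro rfl; exact Or.inl rfl

lemma jBD_eq_jX2_iff {ε : ℝ} (hε : ε < 1/2) {x : ↥(BDelta ε)} {z : X2M} :
    jBD ε x = jX2 ε z ↔ MatchesBD ε x.1 z := by
  refine (x2bar_eq (a := Sum.inl x) (b := Sum.inr z) hε).trans ?_
  constructor
  · intro h
    rcases h with h | h
    · exact absurd h (by simp)
    · exact h
  · intro h; exact Or.inr h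

lemma jX2_injective {ε : ℝ} (hε : ε < 1/2) : Function.Injective (jX2 ε) :=
  fun z z' h => (jX2_eq_jX2_iff hε).mp h

lemma continuous_jX2 (ε : ℝ) : Continuous (jX2 ε) :=
  continuous_quot_mk.comp continuous_inr

lemma continuous_jBD (ε : ℝ) : Continuous (jBD ε) :=
  continuous_quot_mk.comp continuous_inl

/-- the embedding of the configuration space into `Mext × Mext`. -/
def emb2 : X2M → Mext × Mext := fun z => (z.1.1.1, z.1.2.1)

lemma isInducing_emb2 : Topology.IsInducing emb2 := by
  have h1 : Topology.IsInducing (Subtype.val : X2M → Mob × Mob) :=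
    Topology.IsEmbedding.subtypeVal.toIsInducing
  have h2 : Topology.IsInducing (Prod.map (Subtype.val : Mob → Mext) (Subtype.val : Mob → Mext)) :=
    Topology.IsInducing.prodMap Topology.IsEmbedding.subtypeVal.toIsInducing
      Topology.IsEmbedding.subtypeVal.toIsInducing
  exact h2.comp h1

lemma matches_psi_emb2 {ε : ℝ} {w : TMext} {z : X2M} (h : MatchesBD ε w z) :
    psi w = emb2 z := (matches_en h).2.2

end Aux5
section Aux6
open Real Topology

lemma bdelta_matches {ε : ℝ} (hε : ε < 1/2) (x : ↥(BDelta ε)) (h1 : 1 < En x.1) :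
    ∃ z : X2M, MatchesBD ε x.1 z := by
  obtain ⟨p, v, hmk, hp, hge, hle, himp⟩ := bdelta_elim x.2
  have hv1 : 1 < e2 v := by
    have : En x.1 = e2 v := by rw [← hmk, En_mk]
    rwa [this] at h1
  obtain ⟨z, hm, _, _⟩ := matches_construct hε hp hv1 hle (himp hv1)
  rw [hmk] at hm
  exact ⟨z, hm⟩

lemma matchedSet_eq {ε : ℝ} (hε : ε < 1/2) {U : Set X2M} {U₂ : Set (Mext × Mext)}
    (hU₂ : emb2 ⁻¹' U₂ = U) :
    {x : ↥(BDelta ε) | ∃ z ∈ U, MatchesBD ε x.1 z} =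
      (Subtype.val : ↥(BDelta ε) → TMext) ⁻¹' ({w | 1 < En w} ∩ psi ⁻¹' U₂) := by
  ext x
  constructor
  · rintro ⟨z, hzU, hm⟩
    refine ⟨(matches_en hm).1, ?_⟩
    show psi x.1 ∈ U₂
    rw [matches_psi_emb2 hm]
    rw [← hU₂] at hzU
    exact hzU
  · rintro ⟨h1, h2⟩
    obtain ⟨p, v, hmk, hp, hge, hle, himp⟩ := bdelta_elim x.2
    have hv1 : 1 < e2 v := by
      have he : En x.1 = e2 v := by rw [← hmk, En_mk]
      rw [Set.mem_setOf_eq] at h1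
      rwa [he] at h1
    obtain ⟨z, hm, _, _⟩ := matches_construct hε hp hv1 hle (himp hv1)
    rw [hmk] at hm
    refine ⟨z, ?_, hm⟩
    rw [← hU₂]
    show emb2 z ∈ U₂
    rw [← matches_psi_emb2 hm]
    exact h2

lemma isOpenMap_jX2 {ε : ℝ} (hε : ε < 1/2) : IsOpenMap (jX2 ε) := by
  intro U hU
  obtain ⟨U₂, hU₂open, hU₂⟩ := isInducing_emb2.isOpen_iff.mp hU
  apply (isOpen_coinduced (f := Quot.mk (GlueRel ε))).mpr
  rw [isOpen_sum_iff]
  constructor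
  · have heq : Sum.inl ⁻¹' (Quot.mk (GlueRel ε) ⁻¹' (jX2 ε '' U)) =
        {x : ↥(BDelta ε) | ∃ z ∈ U, MatchesBD ε x.1 z} := by
      ext x
      simp only [Set.mem_preimage, Set.mem_image, Set.mem_setOf_eq]
      constructor
      · rintro ⟨z, hzU, hz⟩
        exact ⟨z, hzU, (jBD_eq_jX2_iff hε).mp hz.symm⟩
      · rintro ⟨z, hzU, hm⟩
        exact ⟨z, hzU, (jBD_eq_jX2 hm).symm⟩
    show IsOpen (Sum.inl ⁻¹' (Quot.mk (GlueRel ε) ⁻¹' (jX2 ε '' U)))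
    rw [heq, matchedSet_eq hε hU₂]
    exact (continuous_subtype_val.isOpen_preimage _
      ((continuous_En.isOpen_preimage _ isOpen_Ioi).inter
        (continuous_psi.isOpen_preimage _ hU₂open)))
  · have heq : Sum.inr ⁻¹' (Quot.mk (GlueRel ε) ⁻¹' (jX2 ε '' U)) = U := by
      ext z'
      simp only [Set.mem_preimage, Set.mem_image]
      constructor
      · rintro ⟨z, hzU, hz⟩
        rwa [← jX2_injective hε hz]
      · intro h
        exact ⟨z', h, rfl⟩
    show IsOpen (Sum.inr ⁻¹' (Quot.mk (GlueRel ε) ⁻¹' (jX2 ε '' U)))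
    rw [heq]
    exact hU

lemma isOpenEmbedding_jX2 {ε : ℝ} (hε : ε < 1/2) : Topology.IsOpenEmbedding (jX2 ε) :=
  Topology.IsOpenEmbedding.of_continuous_injective_isOpenMap (continuous_jX2 ε)
    (jX2_injective hε) (isOpenMap_jX2 hε)

lemma jBD_mem_range_iff {ε : ℝ} (hε : ε < 1/2) {x : ↥(BDelta ε)} :
    jBD ε x ∈ Set.range (jX2 ε) ↔ 1 < En x.1 := by
  constructor
  · rintro ⟨z, hz⟩
    exact (matches_en ((jBD_eq_jX2_iff hε).mp hz.symm)).1
  · intro h1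
    obtain ⟨z, hm⟩ := bdelta_matches hε x h1
    exact ⟨z, (jBD_eq_jX2 hm).symm⟩

end Aux6
section Aux7
open Real Topology

lemma denseRange_jX2 {ε : ℝ} (hε0 : 0 < ε) (hε : ε < 1/2) : DenseRange (jX2 ε) := by
  intro b
  induction b using Quot.ind with
  | _ s =>
  cases s with
  | inr z => exact subset_closure ⟨z, rfl⟩
  | inl x =>
    obtain ⟨p, v, hmk, hp, hge, hle, himp⟩ := bdelta_elim x.2
    rcases lt_or_eq_of_le hge with hv1 | hv1
    · exact subset_closure ((jBD_mem_range_iff hε).mpr (by rw [← hmk, En_mk]; exact hv1))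
    · refine mem_closure_iff.mpr fun O hO hbO => ?_
      set O₁ := Quot.mk (GlueRel ε) ⁻¹' O with hO₁def
      have hO₁open : IsOpen O₁ := hO.preimage continuous_quot_mk
      have hinlopen : IsOpen (Sum.inl ⁻¹' O₁ : Set ↥(BDelta ε)) := (isOpen_sum_iff.mp hO₁open).1
      obtain ⟨O₂, hO₂open, hO₂⟩ :=
        Topology.IsEmbedding.subtypeVal.toIsInducing.isOpen_iff.mp hinlopen
      have hxO₂ : x.1 ∈ O₂ := by
        have hx : x ∈ Sum.inl ⁻¹' O₁ := hbO
        rw [← hO₂] at hx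
        exact hx
      have hO₃ : IsOpen (Quot.mk TanRel ⁻¹' O₂) := hO₂open.preimage continuous_quot_mk
      have hpvO₃ : (p, v) ∈ Quot.mk TanRel ⁻¹' O₂ := by
        show Quot.mk TanRel (p, v) ∈ O₂
        rw [hmk]; exact hxO₂
      obtain ⟨r, hr0, hball⟩ := Metric.isOpen_iff.mp hO₃ _ hpvO₃
      set c : ℝ → (ℝ × ℝ) × (ℝ × ℝ) := fun s => ((p.1, (1 - 4*s) * p.2), Real.exp s • v)
        with hcdef
      have hc : Continuous c := by
        apply Continuous.prodMk
        · exact continuous_const.prodMk (by fun_prop)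
        · exact Real.continuous_exp.smul continuous_const
      have hc0 : c 0 = (p, v) := by
        simp only [hcdef, Real.exp_zero, one_smul, mul_comm]
        norm_num
      have hca := hc.continuousAt (x := 0)
      rw [Metric.continuousAt_iff] at hca
      obtain ⟨η, hη0, hηb⟩ := hca r hr0
      set s₀ := min (η/2) (min ε (1/4)) with hs₀def
      have hs₀0 : 0 < s₀ := lt_min (by linarith) (lt_min hε0 (by norm_num))
      have hs₀η : dist s₀ 0 < η := by
        rw [Real.dist_eq, sub_zero, abs_of_pos hs₀0]
        calc s₀ ≤ η/2 := min_le_left _ _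
          _ < η := by linarith
      have hcs₀ : c s₀ ∈ Quot.mk TanRel ⁻¹' O₂ := by
        apply hball
        have hd := hηb hs₀η
        rw [hc0] at hd
        exact hd
      have hs₀ε : s₀ ≤ ε := le_trans (min_le_right _ _) (min_le_left _ _)
      have hs₀4 : s₀ ≤ 1/4 := le_trans (min_le_right _ _) (min_le_right _ _)
      have hpstrip : |p.2| ≤ 1/2 := mem_strip_iff.mp hp
      have hv2 : |v.2| ≤ 1 := by
        have := e2_snd_le v
        rw [← hv1] at this
        exact this
      have he2 : e2 (Real.exp s₀ • v) = Real.exp s₀ := by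
        rw [e2_smul, abs_of_pos (Real.exp_pos _), ← hv1, mul_one]
      have hb1 : (1:ℝ) ≤ e2 (Real.exp s₀ • v) := by
        rw [he2]; exact Real.one_le_exp hs₀0.le
      have hb2 : Real.log (e2 (Real.exp s₀ • v)) ≤ ε := by
        rw [he2, Real.log_exp]; exact hs₀ε
      have hp' : ((p.1, (1 - 4*s₀) * p.2) : ℝ × ℝ) ∈ stripS := by
        rw [mem_strip_iff]
        show |(1 - 4*s₀) * p.2| ≤ 1/2
        rw [abs_mul, abs_of_nonneg (by linarith : (0:ℝ) ≤ 1 - 4*s₀)]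
        nlinarith [abs_nonneg p.2]
      have hqmem : qpt ((p.1, (1 - 4*s₀) * p.2), Real.exp s₀ • v) ∈ stripS := by
        have hmf : mfac (Real.exp s₀ • v) = s₀ / Real.exp s₀ := by
          rw [mfac_of_ge hb1, he2, Real.log_exp]
        rw [qpt, hmf, smul_smul, div_mul_cancel₀ _ (Real.exp_pos s₀).ne']
        rw [mem_strip_iff]
        show |(1 - 4*s₀) * p.2 + s₀ * v.2| ≤ 1/2
        have h1 : |(1 - 4*s₀) * p.2 + s₀ * v.2| ≤ |(1 - 4*s₀) * p.2| + |s₀ * v.2| := abs_add_le _ _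
        rw [abs_mul, abs_mul, abs_of_nonneg (by linarith : (0:ℝ) ≤ 1 - 4*s₀),
          abs_of_pos hs₀0] at h1
        nlinarith [abs_nonneg p.2, abs_nonneg v.2]
      have hmem : Quot.mk TanRel ((p.1, (1 - 4*s₀) * p.2), Real.exp s₀ • v) ∈ BDelta ε :=
        bdelta_mk_mem hp' hb1 hb2 (fun _ => hqmem)
      refine ⟨jBD ε ⟨_, hmem⟩, ?_, ?_⟩
      · have hy : (⟨Quot.mk TanRel ((p.1, (1 - 4*s₀) * p.2), Real.exp s₀ • v), hmem⟩ :
            ↥(BDelta ε)) ∈ Subtype.val ⁻¹' O₂ := hcs₀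
        rw [hO₂] at hy
        exact hy
      · exact (jBD_mem_range_iff hε).mpr (by
          rw [En_mk]
          show 1 < e2 (Real.exp s₀ • v)
          rw [he2]
          exact Real.one_lt_exp_iff.mpr hs₀0)
end Aux7
section Aux8
open Real Topology

/-- the set of close pairs in `Mext × Mext`. -/
def Nset (ε : ℝ) : Set (Mext × Mext) :=
  Prod.map piE piE '' {ab : (ℝ × ℝ) × (ℝ × ℝ) | e2 (ab.1 - ab.2) < ε}

lemma isOpen_Nset (ε : ℝ) : IsOpen (Nset ε) := by
  apply (isOpenMap_piE.prodMap isOpenMap_piE)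
  exact (continuous_e2.comp (continuous_fst.sub continuous_snd)).isOpen_preimage _ isOpen_Iio

instance compactSpace_Mob : CompactSpace Mob := by
  have himg : piE '' stripS = piE '' (Icc (0:ℝ) 1 ×ˢ Icc (-(1:ℝ)/2) (1/2)) := by
    ext x
    constructor
    · rintro ⟨a, ha, rfl⟩
      refine ⟨tau (-⌊a.1⌋) a, ?_, (piE_eq.mpr ⟨-⌊a.1⌋, rfl⟩).symm⟩
      constructor
      · show a.1 + ((-⌊a.1⌋ : ℤ) : ℝ) ∈ Icc (0:ℝ) 1
        have h4 : a.1 + ((-⌊a.1⌋ : ℤ) : ℝ) = Int.fract a.1 := by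
          rw [Int.fract]; push_cast; ring
        rw [h4]
        exact ⟨Int.fract_nonneg _, le_of_lt (Int.fract_lt_one _)⟩
      · exact tau_mem_strip ha
    · rintro ⟨a, ha, rfl⟩
      exact ⟨a, ha.2, rfl⟩
  have hcomp : IsCompact (piE '' stripS) := by
    rw [himg]
    exact (isCompact_Icc.prod isCompact_Icc).image continuous_piE
  exact isCompact_iff_compactSpace.mp hcomp

lemma compactSpace_x2bar {ε : ℝ} (hε0 : 0 < ε) (hε : ε < 1/2) : CompactSpace (X2bar ε) := by
  haveI : CompactSpace ↥(BDelta ε) := isCompact_iff_compactSpace.mp (isCompact_bdelta ε)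
  set pm : Mob × Mob → Mext × Mext := fun w => (w.1.1, w.2.1) with hpmdef
  have hpmc : Continuous pm :=
    (continuous_subtype_val.comp continuous_fst).prodMk
      (continuous_subtype_val.comp continuous_snd)
  set C := {z : X2M | emb2 z ∉ Nset ε} with hCdef
  have hD : Subtype.val '' C = pm ⁻¹' (Nset ε)ᶜ := by
    ext w
    constructor
    · rintro ⟨z, hz, rfl⟩
      exact hz
    · intro hw
      have hne : w.1 ≠ w.2 := by
        intro heq
        obtain ⟨a, ha, hmk⟩ := w.1.2
        apply hw
        refine ⟨(a, a), by simp [e2_zero, hε0], ?_⟩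
        show (piE a, piE a) = (w.1.1, w.2.1)
        rw [hmk, ← heq]
      exact ⟨⟨w, hne⟩, hw, rfl⟩
  have hDclosed : IsClosed (pm ⁻¹' (Nset ε)ᶜ) :=
    (isOpen_Nset ε).isClosed_compl.preimage hpmc
  have hCcomp : IsCompact C := by
    refine (Topology.IsEmbedding.subtypeVal.isCompact_iff (s := C)).mpr ?_
    show IsCompact (Subtype.val '' C)
    rw [hD]
    exact hDclosed.isCompact
  have h1 : IsCompact (Quot.mk (GlueRel ε) ''
      (Sum.inl '' (Set.univ : Set ↥(BDelta ε)) ∪ Sum.inr '' C)) :=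
    ((isCompact_univ.image continuous_inl).union (hCcomp.image continuous_inr)).image
      continuous_quot_mk
  have h2 : Quot.mk (GlueRel ε) ''
      (Sum.inl '' (Set.univ : Set ↥(BDelta ε)) ∪ Sum.inr '' C) = Set.univ := by
    apply Set.eq_univ_of_forall
    intro b
    induction b using Quot.ind with
    | _ s =>
    cases s with
    | inl x => exact ⟨Sum.inl x, Or.inl ⟨x, trivial, rfl⟩, rfl⟩
    | inr z =>
      by_cases hzC : z ∈ C
      · exact ⟨Sum.inr z, Or.inr ⟨z, hzC, rfl⟩, rfl⟩
      · have hzN : emb2 z ∈ Nset ε := by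
          by_contra hc
          exact hzC hc
        obtain ⟨⟨a, b'⟩, hab, heq⟩ := hzN
        have hpa : piE a = z.1.1.1 := congrArg Prod.fst heq
        have hpb : piE b' = z.1.2.1 := congrArg Prod.snd heq
        have hastrip : a ∈ stripS := mob_rep_strip z.1.1 hpa
        have hbstrip : b' ∈ stripS := mob_rep_strip z.1.2 hpb
        have hne : b' - a ≠ 0 := by
          intro hc
          have hab' : a = b' := by
            have := sub_eq_zero.mp hc
            exact this.symm
          apply z.2
          apply Subtype.ext; rw [← hpa, ← hpb, hab']
        have ht0 : 0 < e2 (b' - a) := e2_pos hne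
        set t := e2 (b' - a) with htdef
        have htε : t < ε := by
          rw [htdef, e2_sub_comm]
          exact hab
        set v := (Real.exp t / t) • (b' - a) with hvdef
        have he2v : e2 v = Real.exp t := by
          rw [hvdef, e2_smul, abs_of_pos (div_pos (Real.exp_pos t) ht0), ← htdef,
            div_mul_cancel₀ _ ht0.ne']
        have hv1 : 1 < e2 v := by rw [he2v]; exact Real.one_lt_exp_iff.mpr ht0
        have hlog : Real.log (e2 v) = t := by rw [he2v, Real.log_exp]
        have hqeq : b' = a + (Real.log (e2 v) / e2 v) • v := by
          rw [hlog, he2v, hvdef, smul_smul, div_mul_div_comm, mul_comm t (Real.exp t),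
            div_self (mul_ne_zero (Real.exp_pos t).ne' ht0.ne'), one_smul]
          abel
        have hm : MatchesBD ε (Quot.mk TanRel (a, v)) z :=
          ⟨a, b', v, rfl, hastrip, hbstrip, hpa, hpb, hv1, by rw [hlog]; exact htε.le, hqeq⟩
        have hmem : Quot.mk TanRel (a, v) ∈ BDelta ε := by
          apply bdelta_mk_mem hastrip hv1.le (by rw [hlog]; exact htε.le)
          intro _
          rw [qpt_of_ge hv1.le, ← hqeq]
          exact hbstrip
        exact ⟨Sum.inl ⟨_, hmem⟩, Or.inl ⟨⟨_, hmem⟩, trivial, rfl⟩, jBD_eq_jX2 hm⟩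
  exact ⟨h2 ▸ h1⟩

end Aux8
section Aux9
open Real Topology

/-- clipping the length of tangent vectors at `exp δ`. -/
def gfun (δ : ℝ) (a : (ℝ × ℝ) × (ℝ × ℝ)) : (ℝ × ℝ) × (ℝ × ℝ) :=
  (a.1, (min (max 1 (e2 a.2)) (Real.exp δ) / max 1 (e2 a.2)) • a.2)

lemma gfun_dtau (δ : ℝ) (n : ℤ) (a : (ℝ × ℝ) × (ℝ × ℝ)) :
    gfun δ (dtau n a) = dtau n (gfun δ a) := by
  have he : e2 ((dtau n a).2) = e2 a.2 := by
    show e2 (a.2.1, (-1:ℝ)^n * a.2.2) = e2 a.2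
    rw [e2_flip]
  unfold gfun
  rw [he]
  set c := min (max 1 (e2 a.2)) (Real.exp δ) / max 1 (e2 a.2) with hc
  apply Prod.ext
  · rfl
  · show c • ((a.2.1, (-1:ℝ)^n * a.2.2) : ℝ × ℝ) = ((c • a.2).1, (-1:ℝ)^n * (c • a.2).2)
    apply Prod.ext
    · rfl
    · show c * ((-1:ℝ)^n * a.2.2) = (-1:ℝ)^n * (c * a.2.2)
      ring

/-- the clipping map on the tangent bundle. -/
def clipT (δ : ℝ) : TMext → TMext :=
  Quot.lift (fun a => Quot.mk TanRel (gfun δ a)) (by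
    intro a b h
    obtain ⟨n, rfl⟩ := (tanRel_iff a b).mp h
    show Quot.mk TanRel (gfun δ a) = Quot.mk TanRel (gfun δ (dtau n a))
    rw [gfun_dtau]
    exact tmk_eq.mpr ⟨n, rfl⟩)

@[simp] lemma clipT_mk (δ : ℝ) (a : (ℝ × ℝ) × (ℝ × ℝ)) :
    clipT δ (Quot.mk TanRel a) = Quot.mk TanRel (gfun δ a) := rfl

lemma continuous_clipT (δ : ℝ) : Continuous (clipT δ) := by
  apply continuous_quot_lift
  apply continuous_quot_mk.comp
  apply Continuous.prodMk continuous_fst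
  have hc : Continuous (fun a : (ℝ × ℝ) × (ℝ × ℝ) => max 1 (e2 a.2)) :=
    continuous_const.max (continuous_e2.comp continuous_snd)
  exact ((hc.min continuous_const).div hc
    (fun a => (max1e2_pos a.2).ne')).smul continuous_snd

lemma clip_spec {ε δ : ℝ} (hδ0 : 0 < δ) {w : TMext} (hw : w ∈ BDelta ε) :
    clipT δ w ∈ BDelta δ ∧ En (clipT δ w) = min (En w) (Real.exp δ) ∧
      (En w ≤ Real.exp δ → clipT δ w = w) := by
  obtain ⟨p, v, hmk, hp, hge, hle, himp⟩ := bdelta_elim hw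
  have hvpos : (0:ℝ) < e2 v := lt_of_lt_of_le one_pos hge
  have hmax : max 1 (e2 v) = e2 v := max_eq_right hge
  have hEnw : En w = e2 v := by rw [← hmk, En_mk]
  set m := min (e2 v) (Real.exp δ) with hmdef
  have hm0 : 0 < m := lt_min hvpos (Real.exp_pos δ)
  have hm1 : 1 ≤ m := le_min hge (Real.one_le_exp hδ0.le)
  have hmlev : m ≤ e2 v := min_le_left _ _
  have hgv : gfun δ (p, v) = (p, (m / e2 v) • v) := by
    unfold gfun
    rw [show ((p, v) : (ℝ × ℝ) × (ℝ × ℝ)).2 = v from rfl, hmax]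
  have he2gv : e2 ((m / e2 v) • v) = m := by
    rw [e2_smul, abs_of_pos (div_pos hm0 hvpos), div_mul_cancel₀ _ hvpos.ne']
  have hwclip : clipT δ w = Quot.mk TanRel (p, (m / e2 v) • v) := by
    rw [← hmk, clipT_mk, hgv]
  have hlogm : Real.log m ≤ δ := by
    calc Real.log m ≤ Real.log (Real.exp δ) := Real.log_le_log hm0 (min_le_right _ _)
      _ = δ := Real.log_exp δ
  have hmem : Quot.mk TanRel (p, (m / e2 v) • v) ∈ BDelta δ := by
    apply bdelta_mk_mem hp (by rw [he2gv]; exact hm1) (by rw [he2gv]; exact hlogm)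
    intro hlt
    rw [he2gv] at hlt
    -- 1 < m, hence 1 < e2 v
    have hv1 : 1 < e2 v := lt_of_lt_of_le hlt hmlev
    have hqstrip : qpt (p, v) ∈ stripS := himp hv1
    set t := Real.log (e2 v) with htdef
    set t' := Real.log m with ht'def
    have ht0 : 0 < t := Real.log_pos hv1
    have ht'0 : 0 < t' := Real.log_pos hlt
    have ht't : t' ≤ t := Real.log_le_log hm0 hmlev
    have hq2 : (qpt (p, v)).2 = p.2 + (t / e2 v) * v.2 := by
      rw [qpt_of_ge hge]
      show p.2 + ((t / e2 v) • v).2 = p.2 + (t / e2 v) * v.2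
      rw [smul_snd']
    have hqc : (qpt (p, (m / e2 v) • v)).2 = p.2 + (t' / e2 v) * v.2 := by
      rw [qpt_of_ge (by rw [he2gv]; exact hm1), he2gv]
      show p.2 + ((t' / m) • ((m / e2 v) • v)).2 = p.2 + (t' / e2 v) * v.2
      rw [smul_smul, smul_snd']
      congr 2
      field_simp
    rw [mem_strip_iff]
    rw [mem_strip_iff] at hp hqstrip
    rw [abs_le] at hp hqstrip ⊢
    rw [hqc]
    rw [hq2] at hqstrip
    have hlam0 : 0 < t' / t := div_pos ht'0 ht0
    have hlam1 : t' / t ≤ 1 := (div_le_one ht0).mpr ht't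
    have hkey : p.2 + (t' / e2 v) * v.2 =
        (1 - t' / t) * p.2 + (t' / t) * (p.2 + (t / e2 v) * v.2) := by
      field_simp
      ring
    rw [hkey]
    constructor <;> nlinarith [hp.1, hp.2, hqstrip.1, hqstrip.2]
  refine ⟨by rw [hwclip]; exact hmem, ?_, ?_⟩
  · rw [hwclip, En_mk]
    show e2 ((m / e2 v) • v) = min (En w) (Real.exp δ)
    rw [he2gv, hEnw]
  · intro hEnle
    have hmv : m = e2 v := min_eq_left (by rw [← hEnw]; exact hEnle)
    rw [hwclip, hmv, div_self hvpos.ne', one_smul, hmk]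

lemma bdelta_mono {ε' ε : ℝ} (hle : ε' ≤ ε) : BDelta ε' ⊆ BDelta ε := by
  rintro w ⟨p, v, hmk, hp, h1, h2, h3⟩
  exact ⟨p, v, hmk, hp, h1, le_trans h2 hle, h3⟩

lemma matches_mono {ε' ε : ℝ} (hle : ε' ≤ ε) {w : TMext} {z : X2M}
    (h : MatchesBD ε' w z) : MatchesBD ε w z := by
  obtain ⟨p, q, v, hw, hp, hq, h1, h2, h3, h4, h5⟩ := h
  exact ⟨p, q, v, hw, hp, hq, h1, h2, h3, le_trans h4 hle, h5⟩

lemma matches_strengthen {ε ε' : ℝ} {w : TMext} {z : X2M}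
    (h : MatchesBD ε w z) (hb : Real.log (En w) ≤ ε') : MatchesBD ε' w z := by
  obtain ⟨p, q, v, hw, hp, hq, h1, h2, h3, h4, h5⟩ := h
  refine ⟨p, q, v, hw, hp, hq, h1, h2, h3, ?_, h5⟩
  have : En w = e2 v := by rw [hw, En_mk]
  rwa [this] at hb

lemma log_en_le {ε : ℝ} {w : TMext} (hw : w ∈ BDelta ε) : Real.log (En w) ≤ ε := by
  obtain ⟨p, v, hmk, hp, h1, h2, _⟩ := bdelta_elim hw
  rw [← hmk, En_mk]
  exact h2

end Aux9
section Aux10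
open Real Topology

/-- the natural map `X2bar ε' → X2bar ε` for `ε' ≤ ε`. -/
def glueIncl {ε' ε : ℝ} (hle : ε' ≤ ε) : X2bar ε' → X2bar ε :=
  Quot.lift (Sum.elim (fun x => jBD ε ⟨x.1, bdelta_mono hle x.2⟩) (jX2 ε)) (by
    intro a b h
    cases a with
    | inl x =>
      cases b with
      | inl x' => exact h.elim
      | inr z =>
        have hm : MatchesBD ε' x.1 z := h
        exact jBD_eq_jX2 (matches_mono hle hm)
    | inr z =>
      cases b with
      | inl x =>
        have hm : MatchesBD ε' x.1 z := h
        exact (jBD_eq_jX2 (matches_mono hle hm)).symm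
      | inr z' => exact h.elim)

lemma continuous_glueIncl {ε' ε : ℝ} (hle : ε' ≤ ε) : Continuous (glueIncl hle) := by
  apply continuous_quot_lift
  exact Continuous.sumElim
    ((continuous_jBD ε).comp (Continuous.subtype_mk continuous_subtype_val _))
    (continuous_jX2 ε)

lemma bdelta_of_en_le {ε ε' : ℝ} {w : TMext} (hw : w ∈ BDelta ε)
    (hEn : En w ≤ Real.exp ε') : w ∈ BDelta ε' := by
  obtain ⟨p, v, hmk, hp, h1, h2, h3⟩ := bdelta_elim hw
  have he : e2 v ≤ Real.exp ε' := by
    rw [← hmk, En_mk] at hEn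
    exact hEn
  rw [← hmk]
  exact bdelta_mk_mem hp h1
    ((Real.log_le_iff_le_exp (lt_of_lt_of_le one_pos h1)).mpr he) h3

lemma glueIncl_injective {ε' ε : ℝ} (hε'0 : 0 < ε') (hε : ε < 1/2) (hle : ε' ≤ ε) :
    Function.Injective (glueIncl hle) := by
  intro a b
  induction a using Quot.ind with | _ s =>
  induction b using Quot.ind with | _ s' =>
  cases s with
  | inl x =>
    cases s' with
    | inl x' =>
      intro h
      have h' : jBD ε ⟨x.1, bdelta_mono hle x.2⟩ = jBD ε ⟨x'.1, bdelta_mono hle x'.2⟩ := h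
      have h3 := Subtype.ext_iff.mp ((jBD_eq_jBD_iff hε).mp h')
      have h4 : x.1 = x'.1 := h3
      exact congrArg (Quot.mk _) (congrArg Sum.inl (Subtype.ext h4))
    | inr z =>
      intro h
      have h' : jBD ε ⟨x.1, bdelta_mono hle x.2⟩ = jX2 ε z := h
      have hm : MatchesBD ε x.1 z := (jBD_eq_jX2_iff hε).mp h'
      have hm' : MatchesBD ε' x.1 z := matches_strengthen hm (log_en_le x.2)
      exact Quot.sound (show GlueRel ε' (Sum.inl x) (Sum.inr z) from hm')
  | inr z =>
    cases s' with
    | inl x =>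
      intro h
      have h' : jBD ε ⟨x.1, bdelta_mono hle x.2⟩ = jX2 ε z := h.symm
      have hm : MatchesBD ε x.1 z := (jBD_eq_jX2_iff hε).mp h'
      have hm' : MatchesBD ε' x.1 z := matches_strengthen hm (log_en_le x.2)
      exact (Quot.sound (show GlueRel ε' (Sum.inl x) (Sum.inr z) from hm')).symm
    | inr z' =>
      intro h
      have h' : jX2 ε z = jX2 ε z' := h
      exact congrArg (Quot.mk _) (congrArg Sum.inr (jX2_injective hε h'))

lemma glueIncl_surjective {ε' ε : ℝ} (hε'0 : 0 < ε') (hε : ε < 1/2) (hle : ε' ≤ ε) :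
    Function.Surjective (glueIncl hle) := by
  intro b
  induction b using Quot.ind with | _ s =>
  cases s with
  | inr z => exact ⟨jX2 ε' z, rfl⟩
  | inl x =>
    by_cases hEn : En x.1 ≤ Real.exp ε'
    · refine ⟨jBD ε' ⟨x.1, bdelta_of_en_le x.2 hEn⟩, ?_⟩
      show jBD ε ⟨x.1, _⟩ = jBD ε x
      exact congrArg (jBD ε) (Subtype.ext rfl)
    · push_neg at hEn
      have h1 : 1 < En x.1 := lt_of_le_of_lt (Real.one_le_exp hε'0.le) hEn
      obtain ⟨z, hm⟩ := bdelta_matches hε x h1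
      exact ⟨jX2 ε' z, (jBD_eq_jX2 hm).symm⟩

lemma isOpenMap_glueIncl {ε' ε : ℝ} (hε'0 : 0 < ε') (hε : ε < 1/2) (hle : ε' ≤ ε) :
    IsOpenMap (glueIncl hle) := by
  have hε' : ε' < 1/2 := lt_of_le_of_lt hle hε
  have hinj := glueIncl_injective hε'0 hε hle
  intro U' hU'
  apply (isOpen_coinduced (f := Quot.mk (GlueRel ε))).mpr
  rw [isOpen_sum_iff]
  set U : Set X2M := (jX2 ε') ⁻¹' U' with hUdef
  have hUopen : IsOpen U := hU'.preimage (continuous_jX2 ε')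
  obtain ⟨U₂, hU₂open, hU₂⟩ := isInducing_emb2.isOpen_iff.mp hUopen
  constructor
  · have heq : Sum.inl ⁻¹' (Quot.mk (GlueRel ε) ⁻¹' (glueIncl hle '' U')) =
        ((fun x : ↥(BDelta ε) => jBD ε' ⟨clipT ε' x.1, (clip_spec hε'0 x.2).1⟩) ⁻¹' U'
          ∩ {x : ↥(BDelta ε) | En x.1 < Real.exp ε'})
        ∪ {x : ↥(BDelta ε) | ∃ z ∈ U, MatchesBD ε x.1 z} := by
      ext x
      simp only [Set.mem_preimage, Set.mem_image, Set.mem_union, Set.mem_inter_iff,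
        Set.mem_setOf_eq]
      constructor
      · rintro ⟨u, huU', hgu⟩
        obtain ⟨s', rfl⟩ := Quot.exists_rep u
        cases s' with
        | inr z =>
          have hgu' : jX2 ε z = jBD ε x := hgu
          right
          refine ⟨z, ?_, (jBD_eq_jX2_iff hε).mp hgu'.symm⟩
          show jX2 ε' z ∈ U'
          exact huU'
        | inl xh =>
          have hgu' : jBD ε ⟨xh.1, bdelta_mono hle xh.2⟩ = jBD ε x := hgu
          have hxx : xh.1 = x.1 := congrArg Subtype.val ((jBD_eq_jBD_iff hε).mp hgu')
          have hEnle : En x.1 ≤ Real.exp ε' := by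
            rw [← hxx]; exact (en_bdelta xh.2).2
          rcases lt_or_eq_of_le hEnle with hlt | heq2
          · left
            refine ⟨?_, hlt⟩
            have hclip : clipT ε' x.1 = x.1 := (clip_spec hε'0 x.2).2.2 hEnle
            have hsub : (⟨clipT ε' x.1, (clip_spec hε'0 x.2).1⟩ : ↥(BDelta ε')) = xh :=
              Subtype.ext (by show clipT ε' x.1 = xh.1; rw [hclip]; exact hxx.symm)
            show jBD ε' (⟨clipT ε' x.1, (clip_spec hε'0 x.2).1⟩ : ↥(BDelta ε')) ∈ U'
            rw [hsub]
            exact huU'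
          · right
            have h1 : 1 < En x.1 := by
              rw [heq2]; exact Real.one_lt_exp_iff.mpr hε'0
            obtain ⟨z, hm⟩ := bdelta_matches hε x h1
            refine ⟨z, ?_, hm⟩
            have hm' : MatchesBD ε' xh.1 z := by
              rw [hxx]
              exact matches_strengthen hm (le_of_eq (by rw [heq2, Real.log_exp]))
            have he3 : jBD ε' xh = jX2 ε' z := jBD_eq_jX2 hm'
            show jX2 ε' z ∈ U'
            rw [← he3]
            exact huU'
      · rintro (⟨hA, hlt⟩ | ⟨z, hzU, hm⟩)
        · refine ⟨jBD ε' ⟨clipT ε' x.1, (clip_spec hε'0 x.2).1⟩, hA, ?_⟩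
          have hclip : clipT ε' x.1 = x.1 := (clip_spec hε'0 x.2).2.2 hlt.le
          show jBD ε ⟨(⟨clipT ε' x.1, (clip_spec hε'0 x.2).1⟩ : ↥(BDelta ε')).1,
            bdelta_mono hle (⟨clipT ε' x.1, (clip_spec hε'0 x.2).1⟩ : ↥(BDelta ε')).2⟩
            = jBD ε x
          exact congrArg (jBD ε) (Subtype.ext hclip)
        · exact ⟨jX2 ε' z, hzU, (jBD_eq_jX2 hm).symm⟩
    show IsOpen (Sum.inl ⁻¹' (Quot.mk (GlueRel ε) ⁻¹' (glueIncl hle '' U')))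
    rw [heq]
    apply IsOpen.union
    · apply IsOpen.inter
      · apply hU'.preimage
        exact (continuous_jBD ε').comp
          (Continuous.subtype_mk ((continuous_clipT ε').comp continuous_subtype_val) _)
      · exact isOpen_lt (continuous_En.comp continuous_subtype_val) continuous_const
    · rw [matchedSet_eq hε hU₂]
      exact continuous_subtype_val.isOpen_preimage _
        ((continuous_En.isOpen_preimage _ isOpen_Ioi).inter
          (continuous_psi.isOpen_preimage _ hU₂open))
  · have heq : Sum.inr ⁻¹' (Quot.mk (GlueRel ε) ⁻¹' (glueIncl hle '' U')) = U := by
      ext z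
      simp only [Set.mem_preimage, Set.mem_image]
      constructor
      · rintro ⟨u, huU', hgu⟩
        have hu : u = jX2 ε' z := by
          apply hinj
          exact hgu
        rw [hu] at huU'
        exact huU'
      · intro hz
        exact ⟨jX2 ε' z, hz, rfl⟩
    show IsOpen (Sum.inr ⁻¹' (Quot.mk (GlueRel ε) ⁻¹' (glueIncl hle '' U')))
    rw [heq]
    exact hUopen

lemma glueIncl_homeo {ε' ε : ℝ} (hε'0 : 0 < ε') (hε : ε < 1/2) (hle : ε' ≤ ε) :
    ∃ e : X2bar ε' ≃ₜ X2bar ε, ∀ z : X2M, e (jX2 ε' z) = jX2 ε z := by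
  have hbij : Function.Bijective (glueIncl hle) :=
    ⟨glueIncl_injective hε'0 hε hle, glueIncl_surjective hε'0 hε hle⟩
  exact ⟨(Equiv.ofBijective _ hbij).toHomeomorphOfContinuousOpen
    (continuous_glueIncl hle) (isOpenMap_glueIncl hε'0 hε hle), fun z => rfl⟩

end Aux10

/-- **Statement 12.** -/
theorem x2bar_compact_denseOpen_and_independent_of_eps
    (ε : ℝ) (hε0 : 0 < ε) (hε : ε < 1/2) :
    CompactSpace (X2bar ε) ∧
    Topology.IsOpenEmbedding (jX2 ε) ∧
    DenseRange (jX2 ε) ∧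
    ∀ ε' : ℝ, 0 < ε' → ε' < 1/2 →
      ∃ h : X2bar ε ≃ₜ X2bar ε', ∀ z : X2M, h (jX2 ε z) = jX2 ε' z := by
  refine ⟨compactSpace_x2bar hε0 hε, isOpenEmbedding_jX2 hε, denseRange_jX2 hε0 hε, ?_⟩
  intro ε' hε'0 hε'
  rcases le_total ε ε' with hle | hle
  · exact glueIncl_homeo hε0 hε' hle
  · obtain ⟨e, he⟩ := glueIncl_homeo hε'0 hε hle
    refine ⟨e.symm, fun z => ?_⟩
    rw [← he z, Homeomorph.symm_apply_apply]

end
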